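/- If G = G1 × G2 is the Cartesian product of connected graphs G1 and G2, then rt(G) ≤ 2·min(rt(G1), rt(G2)) + max(rt(G1), rt(G2)). -/

import Mathlib

/-- A single routing step on `G`: an involutive permutation that swaps the pebbles
on the endpoints of each edge of a matching of `G`. -/
def IsMatchingStep {V : Type*} (G : SimpleGraph V) (σ : Equiv.Perm V) : Prop :=
  (∀ v, σ (σ v) = v) ∧ ∀ v, σ v ≠ v → G.Adj v (σ v)

/-- The permutation `π` (giving the destination of each pebble) can be routed on `G`
in `k` matching steps. -/
def RoutableIn {V : Type*} (G : SimpleGraph V) (π : Equiv.Perm V) (k : ℕ) : Prop :=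
  ∃ L : List (Equiv.Perm V), L.length = k ∧ (∀ σ ∈ L, IsMatchingStep G σ) ∧
    L.reverse.prod = π

/-- The routing time `rt(G, π)`: the minimum number of matching steps needed to
route `π` on `G`. -/
noncomputable def routingTime {V : Type*} (G : SimpleGraph V) (π : Equiv.Perm V) : ℕ :=
  sInf {k | RoutableIn G π k}

/-- The routing number `rt(G)`: the maximum of `rt(G, π)` over all permutations `π`. -/
noncomputable def routingNumber {V : Type*} (G : SimpleGraph V) : ℕ :=
  sSup (Set.range fun π : Equiv.Perm V => routingTime G π)

/-!
Think of `V₁ × V₂` as a grid with columns `{u} × V₂`, routed in copies of `G₂`, and rows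
`V₁ × {v}`, routed in copies of `G₁`. Every permutation `π` of the grid factors as
column-row-column: give each pebble `x` a row `φ x` so that no two pebbles share a row within
their starting column nor within their target column. Such a `φ` is a proper edge colouring with
`|V₂|` colours of the `|V₂|`-regular bipartite multigraph joining the starting column of each
pebble to its target column, which exists by König's theorem (repeated Hall matchings). Each phase
routes all columns (or rows) in parallel, giving `rt(G₁ □ G₂) ≤ 2 rt(G₂) + rt(G₁)`, and by the
symmetry of `□` also with the roles of `G₁` and `G₂` exchanged.
-/

open Finset Function

section Konig

variable {ι α : Type*} [DecidableEq α]

/-- `S` is the edge set of a bipartite multigraph on two copies of `α`, the edge `x` joining `l x`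
on the left to `r x` on the right, and every vertex has degree `k`. -/
def IsBiregular (l r : ι → α) (S : Finset ι) (k : ℕ) : Prop :=
  ∀ a, #{x ∈ S | l x = a} = k ∧ #{x ∈ S | r x = a} = k

theorem Finset.card_filter_mem_eq_mul {f : ι → α} {S : Finset ι} {k : ℕ}
    (hf : ∀ a, #{x ∈ S | f x = a} = k) (s : Finset α) : #{x ∈ S | f x ∈ s} = #s * k := by
  rw [card_eq_sum_card_fiberwise (s := {x ∈ S | f x ∈ s}) (t := s)
    fun x hx => (mem_filter.1 hx).2, sum_congr rfl fun a ha => ?_, sum_const, smul_eq_mul]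
  rw [filter_filter, ← hf a]
  exact congrArg card (filter_congr fun x _ => ⟨fun h => h.2, fun h => ⟨h ▸ ha, h⟩⟩)

theorem Finset.card_filter_image_eq_one [Fintype α] [DecidableEq ι] {e : α → ι} {f : ι → α}
    (hfe : Bijective (f ∘ e)) (a : α) : #{x ∈ univ.image e | f x = a} = 1 := by
  rw [filter_image, card_image_of_injective _ hfe.1.of_comp, card_eq_one]
  refine ⟨(Equiv.ofBijective _ hfe).symm a, ?_⟩
  ext b
  simp only [mem_filter, mem_univ, true_and, mem_singleton]
  exact (Equiv.ofBijective _ hfe).eq_symm_apply.symm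

variable [DecidableEq ι] {l r : ι → α} {S : Finset ι} {k : ℕ}

theorem IsBiregular.sdiff (hS : IsBiregular l r S (k + 1)) {M : Finset ι} (hMS : M ⊆ S)
    (hM : IsBiregular l r M 1) : IsBiregular l r (S \ M) k := by
  have key : ∀ (f : ι → α) a, #{x ∈ S | f x = a} = k + 1 → #{x ∈ M | f x = a} = 1 →
      #{x ∈ S \ M | f x = a} = k := by
    intro f a hS hM
    have : {x ∈ S \ M | f x = a} = {x ∈ S | f x = a} \ {x ∈ M | f x = a} := by
      ext x; simp only [mem_filter, mem_sdiff]; tauto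
    rw [this, card_sdiff_of_subset (filter_subset_filter _ hMS), hS, hM, Nat.add_sub_cancel]
  exact fun a => ⟨key l a (hS a).1 (hM a).1, key r a (hS a).2 (hM a).2⟩

variable [Fintype α]

theorem IsBiregular.exists_perfectMatching (hS : IsBiregular l r S k) (hk : 0 < k) :
    ∃ M ⊆ S, IsBiregular l r M 1 := by
  set t : α → Finset α := fun a => {x ∈ S | l x = a}.image r
  have hall : ∀ s : Finset α, #s ≤ #(s.biUnion t) := by
    intro s
    refine Nat.le_of_mul_le_mul_right ?_ hk
    calc #s * k = #{x ∈ S | l x ∈ s} := (card_filter_mem_eq_mul (fun a => (hS a).1) s).symm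
      _ ≤ #{x ∈ S | r x ∈ s.biUnion t} := by
        refine card_le_card fun x hx => ?_
        simp only [mem_filter, mem_biUnion, t, mem_image] at hx ⊢
        exact ⟨hx.1, l x, hx.2, x, ⟨hx.1, rfl⟩, rfl⟩
      _ = #(s.biUnion t) * k := card_filter_mem_eq_mul (fun a => (hS a).2) _
  obtain ⟨g, hg_inj, hg⟩ := (all_card_le_biUnion_card_iff_exists_injective t).1 hall
  have : ∀ a, ∃ x ∈ S, l x = a ∧ r x = g a := by
    simpa [t, and_assoc] using hg
  choose e heS hel her using this
  refine ⟨univ.image e, image_subset_iff.2 fun a _ => heS a, fun a => ⟨?_, ?_⟩⟩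
  · refine card_filter_image_eq_one ?_ a
    simp [comp_def, hel]
  · refine card_filter_image_eq_one ?_ a
    simpa [comp_def, her] using Finite.injective_iff_bijective.1 hg_inj

/-- König's edge colouring theorem. The colours are natural numbers below `k` rather than elements
of `Fin k`, since for `k = 0` the set `S` is empty but `ι` need not be. -/
theorem IsBiregular.exists_coloring (hS : IsBiregular l r S k) :
    ∃ c : ι → ℕ, (∀ x ∈ S, c x < k) ∧
      Set.InjOn (fun x => (l x, c x)) S ∧ Set.InjOn (fun x => (r x, c x)) S := by
  induction k generalizing S with
  | zero =>
    have hS_empty : S = ∅ := eq_empty_of_forall_notMem fun x hx => by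
      have hpos : 0 < #{y ∈ S | l y = l x} := card_pos.2 ⟨x, mem_filter.2 ⟨hx, rfl⟩⟩
      rw [(hS (l x)).1] at hpos
      exact hpos.false
    subst hS_empty
    exact ⟨fun _ => 0, by simp, by simp, by simp⟩
  | succ k ih =>
    obtain ⟨M, hMS, hM⟩ := hS.exists_perfectMatching k.succ_pos
    obtain ⟨c, hc_lt, hcl, hcr⟩ := ih (hS.sdiff hMS hM)
    have hc_lt' : ∀ x ∈ S, x ∉ M → c x < k := fun x hx hxM => hc_lt x (mem_sdiff.2 ⟨hx, hxM⟩)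
    set c' : ι → ℕ := fun x => if x ∈ M then k else c x
    have extend : ∀ f : ι → α, (∀ a, #{x ∈ M | f x = a} = 1) →
        Set.InjOn (fun x => (f x, c x)) ↑(S \ M) → Set.InjOn (fun x => (f x, c' x)) S := by
      intro f hfM hfc x hx y hy hxy
      obtain ⟨hf, hc⟩ := Prod.mk.inj hxy
      by_cases hxM : x ∈ M <;> by_cases hyM : y ∈ M <;>
        simp only [c', hxM, hyM, if_true, if_false] at hc
      · exact card_le_one.1 (hfM (f x)).le x (mem_filter.2 ⟨hxM, rfl⟩) y
          (mem_filter.2 ⟨hyM, hf.symm⟩)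
      · exact absurd hc (hc_lt' y hy hyM).ne'
      · exact absurd hc (hc_lt' x hx hxM).ne
      · exact hfc (mem_sdiff.2 ⟨hx, hxM⟩) (mem_sdiff.2 ⟨hy, hyM⟩) (Prod.ext hf hc)
    refine ⟨c', fun x hx => ?_, extend l (fun a => (hM a).1) hcl, extend r (fun a => (hM a).2) hcr⟩
    by_cases hxM : x ∈ M
    · simp [c', hxM]
    · simpa [c', hxM] using (hc_lt' x hx hxM).trans k.lt_succ_self

end Konig

namespace Equiv.Perm

variable {α β : Type*}

theorem exists_prodCongrRight_eq {σ : Perm (α × β)}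
    (h : ∀ x, (σ x).1 = x.1) : ∃ g : α → Perm β, prodCongrRight g = σ := by
  have hσ : ∀ x, ((x.1, (σ x).2) : α × β) = σ x := fun x => Prod.ext (h x).symm rfl
  have hσ' : ∀ x, ((x.1, (σ⁻¹ x).2) : α × β) = σ⁻¹ x := fun x =>
    Prod.ext (by simpa using h (σ⁻¹ x)) rfl
  refine ⟨fun u =>
    { toFun := fun v => (σ (u, v)).2
      invFun := fun v => (σ⁻¹ (u, v)).2
      left_inv := fun v => by dsimp only; rw [hσ (u, v), Perm.inv_def, symm_apply_apply]
      right_inv := fun v => by dsimp only; rw [hσ' (u, v), Perm.inv_def, apply_symm_apply] }, ?_⟩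
  ext x
  · simp [h]
  · rfl

theorem exists_factorization_of_injective [Finite α] [Finite β] (π : Perm (α × β))
    (φ : α × β → β) (hφ : Injective fun x => (x.1, φ x))
    (hπφ : Injective fun x => ((π x).1, φ x)) :
    ∃ A R C : Perm (α × β), (∀ x, (A x).1 = x.1) ∧ (∀ x, (R x).2 = x.2) ∧
      (∀ x, (C x).1 = x.1) ∧ π = A * R * C := by
  -- `C` moves the pebble `x` to `(x.1, φ x)`, then `R` moves it along its row to the column
  -- `(π x).1` of its destination.
  set C := Equiv.ofBijective _ (Finite.injective_iff_bijective.1 hφ)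
  have hR : Injective fun y => ((π (C.symm y)).1, y.2) := by
    intro y y' h
    have hφC : ∀ y, φ (C.symm y) = y.2 := fun y => congrArg Prod.snd (C.apply_symm_apply y)
    simpa using hπφ (a₁ := C.symm y) (a₂ := C.symm y') (by simpa [hφC] using h)
  set R := Equiv.ofBijective _ (Finite.injective_iff_bijective.1 hR)
  refine ⟨π * C⁻¹ * R⁻¹, R, C, fun y => ?_, fun _ => rfl, fun _ => rfl, by group⟩
  calc (π (C⁻¹ (R⁻¹ y))).1 = (R (R⁻¹ y)).1 := rfl
    _ = y.1 := by rw [Perm.inv_def, R.apply_symm_apply]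

theorem isBiregular_fst (π : Perm (α × β)) [Fintype α] [DecidableEq α] [Fintype β] :
    IsBiregular Prod.fst (fun x => (π x).1) univ (Fintype.card β) := by
  intro a
  have hfst : #{x : α × β | x.1 = a} = Fintype.card β :=
    calc #{x : α × β | x.1 = a} = #({a} ×ˢ (univ : Finset β)) :=
          congrArg card (by ext ⟨u, v⟩; simp [eq_comm])
      _ = Fintype.card β := by simp
  exact ⟨hfst, hfst ▸ card_equiv π fun x => by simp⟩

theorem exists_factorization [Finite α] [Finite β] (π : Perm (α × β)) :
    ∃ A R C : Perm (α × β), (∀ x, (A x).1 = x.1) ∧ (∀ x, (R x).2 = x.2) ∧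
      (∀ x, (C x).1 = x.1) ∧ π = A * R * C := by
  classical
  cases nonempty_fintype α
  cases nonempty_fintype β
  obtain ⟨c, hc_lt, hc_fst, hc_π⟩ := (isBiregular_fst π).exists_coloring
  set e := (Fintype.equivFin β).symm
  set φ : α × β → β := fun x => e ⟨c x, hc_lt x (mem_univ x)⟩
  have hφ : ∀ x y, φ x = φ y → c x = c y := fun x y h => by simpa [φ] using h
  refine exists_factorization_of_injective π φ (fun x y h => ?_) (fun x y h => ?_) <;>
    obtain ⟨h₁, h₂⟩ := Prod.mk.inj h
  · exact hc_fst (mem_univ x) (mem_univ y) (Prod.ext h₁ (hφ x y h₂))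
  · exact hc_π (mem_univ x) (mem_univ y) (Prod.ext h₁ (hφ x y h₂))

end Equiv.Perm

section Routing

open Equiv

variable {V : Type*} {G : SimpleGraph V} {π ρ : Perm V} {k m : ℕ}

theorem isMatchingStep_one : IsMatchingStep G 1 :=
  ⟨fun _ => rfl, fun _ h => (h rfl).elim⟩

theorem isMatchingStep_swap [DecidableEq V] {x y : V} (h : G.Adj x y) :
    IsMatchingStep G (swap x y) := by
  refine ⟨swap_apply_self x y, fun v hv => ?_⟩
  rcases eq_or_ne v x with rfl | hvx
  · rwa [swap_apply_left]
  rcases eq_or_ne v y with rfl | hvy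
  · rw [swap_apply_right]; exact h.symm
  · exact absurd (swap_apply_of_ne_of_ne hvx hvy) hv

theorem routableIn_zero_iff : RoutableIn G π 0 ↔ π = 1 := by
  simp [RoutableIn, eq_comm]

theorem routableIn_succ_iff :
    RoutableIn G π (k + 1) ↔ ∃ ρ σ, RoutableIn G ρ k ∧ IsMatchingStep G σ ∧ π = ρ * σ := by
  constructor
  · rintro ⟨_ | ⟨σ, L⟩, hlen, hL, rfl⟩
    · simp at hlen
    · exact ⟨L.reverse.prod, σ, ⟨L, by simpa using hlen, fun τ hτ => hL τ (by simp [hτ]), rfl⟩,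
        hL σ (by simp), by simp⟩
  · rintro ⟨ρ, σ, ⟨L, rfl, hL, rfl⟩, hσ, rfl⟩
    exact ⟨σ :: L, rfl, by simpa [hσ] using hL, by simp⟩

theorem RoutableIn.mono (h : RoutableIn G π k) (hkm : k ≤ m) : RoutableIn G π m := by
  induction hkm with
  | refl => exact h
  | step _ ih => exact routableIn_succ_iff.2 ⟨π, 1, ih, isMatchingStep_one, (mul_one π).symm⟩

theorem RoutableIn.mul (hπ : RoutableIn G π k) (hρ : RoutableIn G ρ m) :
    RoutableIn G (π * ρ) (k + m) := by
  induction m generalizing ρ with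
  | zero => rwa [routableIn_zero_iff.1 hρ, mul_one]
  | succ m ih =>
    obtain ⟨ρ', σ, hρ', hσ, rfl⟩ := routableIn_succ_iff.1 hρ
    exact routableIn_succ_iff.2 ⟨π * ρ', σ, ih hρ', hσ, (mul_assoc _ _ _).symm⟩

theorem SimpleGraph.Walk.exists_routableIn_swap [DecidableEq V] {a b : V} (w : G.Walk a b) :
    ∃ k, RoutableIn G (swap a b) k := by
  induction w with
  | nil => exact ⟨0, routableIn_zero_iff.2 (swap_self _)⟩
  | @cons a c b hac p ih =>
    obtain ⟨k, hk⟩ := ih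
    have hac' : RoutableIn G (swap a c) 1 :=
      routableIn_succ_iff.2 ⟨1, _, routableIn_zero_iff.2 rfl, isMatchingStep_swap hac, by simp⟩
    rcases eq_or_ne b a with rfl | hba
    · exact ⟨0, routableIn_zero_iff.2 (swap_self _)⟩
    rcases eq_or_ne b c with rfl | hbc
    · exact ⟨1, hac'⟩
    refine ⟨1 + k + 1, ?_⟩
    rw [← swap_mul_swap_mul_swap hbc hba, swap_comm c a, swap_comm b c]
    exact (hac'.mul hk).mul hac'

theorem SimpleGraph.Connected.exists_routableIn [Finite V] (h : G.Connected) (π : Perm V) :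
    ∃ k, RoutableIn G π k := by
  classical
  induction π using Perm.swap_induction_on with
  | one => exact ⟨0, routableIn_zero_iff.2 rfl⟩
  | swap_mul f x y _ ihf =>
    obtain ⟨k, hk⟩ := ihf
    obtain ⟨m, hm⟩ := (h.preconnected x y).some.exists_routableIn_swap
    exact ⟨m + k, hm.mul hk⟩

theorem routingTime_le (h : RoutableIn G π k) : routingTime G π ≤ k :=
  Nat.sInf_le h

theorem routingNumber_le (h : ∀ π, RoutableIn G π k) : routingNumber G ≤ k :=
  csSup_le (Set.range_nonempty _) fun _ ⟨π, hπ⟩ => hπ ▸ routingTime_le (h π)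

theorem SimpleGraph.Connected.routableIn_routingNumber [Finite V] (h : G.Connected)
    (π : Perm V) : RoutableIn G π (routingNumber G) :=
  RoutableIn.mono (Nat.sInf_mem (h.exists_routableIn π)) <|
    le_csSup (Set.finite_range _).bddAbove ⟨π, rfl⟩

end Routing

section Iso

open Equiv

variable {V V' : Type*} {G : SimpleGraph V} {G' : SimpleGraph V'} {π σ : Perm V} {k : ℕ}

theorem IsMatchingStep.permCongr (e : G ≃g G') (h : IsMatchingStep G σ) :
    IsMatchingStep G' (e.toEquiv.permCongr σ) := by
  refine ⟨fun v => ?_, fun v hv => ?_⟩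
  · change e.toEquiv (σ (e.toEquiv.symm (e.toEquiv (σ (e.toEquiv.symm v))))) = v
    rw [symm_apply_apply, h.1, apply_symm_apply]
  have hne : σ (e.toEquiv.symm v) ≠ e.toEquiv.symm v := fun h' =>
    hv (by simp [permCongr_apply, h'])
  have hadj := e.map_adj_iff.2 (h.2 _ hne)
  rwa [← RelIso.coe_fn_toEquiv, apply_symm_apply] at hadj

theorem RoutableIn.permCongr (e : G ≃g G') (h : RoutableIn G π k) :
    RoutableIn G' (e.toEquiv.permCongr π) k := by
  induction k generalizing π with
  | zero =>
    rw [routableIn_zero_iff.1 h, routableIn_zero_iff]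
    ext; simp [permCongr_apply]
  | succ k ih =>
    obtain ⟨ρ, σ, hρ, hσ, rfl⟩ := routableIn_succ_iff.1 h
    exact routableIn_succ_iff.2 ⟨_, _, ih hρ, hσ.permCongr e, permCongr_mul _ _ _⟩

theorem routableIn_permCongr_iff (e : G ≃g G') :
    RoutableIn G' (e.toEquiv.permCongr π) k ↔ RoutableIn G π k :=
  ⟨fun h => e.toEquiv.permCongr.symm_apply_apply π ▸ h.permCongr e.symm, (·.permCongr e)⟩

theorem routingNumber_congr (e : G ≃g G') : routingNumber G = routingNumber G' := by
  have hT : ∀ π, routingTime G' (e.toEquiv.permCongr π) = routingTime G π := fun π => by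
    simp only [routingTime, routableIn_permCongr_iff]
  simp only [routingNumber, ← hT]
  exact congrArg sSup (EquivLike.range_comp (routingTime G') e.toEquiv.permCongr)

end Iso

section BoxProd

open Equiv

variable {V₁ V₂ : Type*} {G₁ : SimpleGraph V₁} {G₂ : SimpleGraph V₂} {k : ℕ}

theorem IsMatchingStep.prodCongrRight {σ : V₁ → Perm V₂} (h : ∀ u, IsMatchingStep G₂ (σ u)) :
    IsMatchingStep (G₁ □ G₂) (prodCongrRight σ) := by
  refine ⟨fun ⟨u, v⟩ => by simp [(h u).1], fun ⟨u, v⟩ hx => ?_⟩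
  have hne : σ u v ≠ v := fun h' => hx (by simp [h'])
  simpa using (h u).2 v hne

theorem RoutableIn.prodCongrRight {g : V₁ → Perm V₂} (h : ∀ u, RoutableIn G₂ (g u) k) :
    RoutableIn (G₁ □ G₂) (prodCongrRight g) k := by
  induction k generalizing g with
  | zero =>
    rw [routableIn_zero_iff]
    ext x <;> simp [routableIn_zero_iff.1 (h x.1)]
  | succ k ih =>
    choose ρ σ hρ hσ hg using fun u => routableIn_succ_iff.1 (h u)
    refine routableIn_succ_iff.2 ⟨_, _, ih hρ, .prodCongrRight hσ, ?_⟩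
    ext x <;> simp [hg]

theorem RoutableIn.boxProd_of_fst_eq [Finite V₂] (h₂ : G₂.Connected) {σ : Perm (V₁ × V₂)}
    (hσ : ∀ x, (σ x).1 = x.1) : RoutableIn (G₁ □ G₂) σ (routingNumber G₂) := by
  obtain ⟨g, rfl⟩ := σ.exists_prodCongrRight_eq hσ
  exact .prodCongrRight fun u => h₂.routableIn_routingNumber (g u)

theorem RoutableIn.boxProd_of_snd_eq [Finite V₁] (h₁ : G₁.Connected) {σ : Perm (V₁ × V₂)}
    (hσ : ∀ x, (σ x).2 = x.2) : RoutableIn (G₁ □ G₂) σ (routingNumber G₁) := by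
  rw [← routableIn_permCongr_iff (SimpleGraph.boxProdComm G₁ G₂)]
  exact .boxProd_of_fst_eq h₁ fun x => hσ (x.2, x.1)

end BoxProd

theorem routingNumber_boxProd_le {V₁ V₂ : Type*} [Finite V₁] [Finite V₂]
    {G₁ : SimpleGraph V₁} {G₂ : SimpleGraph V₂} (h₁ : G₁.Connected) (h₂ : G₂.Connected) :
    routingNumber (G₁ □ G₂) ≤ 2 * routingNumber G₂ + routingNumber G₁ := by
  refine routingNumber_le fun π => ?_
  obtain ⟨A, R, C, hA, hR, hC, rfl⟩ := π.exists_factorization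
  exact (((RoutableIn.boxProd_of_fst_eq h₂ hA).mul (.boxProd_of_snd_eq h₁ hR)).mul
    (.boxProd_of_fst_eq h₂ hC)).mono (by omega)

theorem routingNumber_boxProd_general
    {V1 V2 : Type*} [Fintype V1] [Fintype V2]
    (G1 : SimpleGraph V1) (G2 : SimpleGraph V2)
    (h1 : G1.Connected) (h2 : G2.Connected) :
    routingNumber (G1.boxProd G2) ≤
      2 * min (routingNumber G1) (routingNumber G2) +
        max (routingNumber G1) (routingNumber G2) := by
  have h₁₂ := routingNumber_boxProd_le h1 h2
  have h₂₁ := routingNumber_boxProd_le h2 h1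
  rw [← routingNumber_congr (SimpleGraph.boxProdComm G1 G2)] at h₂₁
  omega

/-- The routing number of the Cartesian (box) product satisfies
`rt(G1 □ G2) ≤ 2 min(rt(G1), rt(G2)) + max(rt(G1), rt(G2))`. -/
theorem routingNumber_boxProd
    {V1 V2 : Type*} [Fintype V1] [DecidableEq V1] [Fintype V2] [DecidableEq V2]
    (G1 : SimpleGraph V1) (G2 : SimpleGraph V2)
    (h1 : G1.Connected) (h2 : G2.Connected) :
    routingNumber (G1.boxProd G2) ≤
      2 * min (routingNumber G1) (routingNumber G2) +
        max (routingNumber G1) (routingNumber G2) :=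
  routingNumber_boxProd_general G1 G2 h1 h2
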